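/- With the simple belief function, the user utility U(c) = (v - c)·log₂(q·K·c/(c+C)) is strictly concave on the interval where log₂(q·K·c/(c+C)) > 0 and c < v; consequently the first-order condition dU/dc = 0 has at most one solution in that interval. -/

import Mathlib

/-!
On `I = (C / (qK - 1), v)` write `U c = (v - c) * g c` with `g = log₂ (qKc/(c+C))`. Then
`U' = -g + (v - c) g'`, where `g` is strictly increasing and `g' = C / (c (c + C) log 2)` is
positive and decreasing, as is `v - c`; so `U'` is strictly decreasing on `I`. This gives strict
concavity and makes `U'` injective on `I`, hence it has at most one zero there.
-/

open Real Set

theorem setOf_one_lt_mul_div_add_eq_Ioo {a C v : ℝ} (hC : 0 < C) (ha : 1 < a) :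
    {c : ℝ | 0 < c ∧ c < v ∧ 1 < a * c / (c + C)} = Ioo (C / (a - 1)) v := by
  have ha' : 0 < a - 1 := sub_pos.2 ha
  ext c
  simp only [mem_ofPred_eq, mem_Ioo, div_lt_iff₀ ha']
  constructor
  · rintro ⟨hc, hcv, h⟩
    rw [one_lt_div (by positivity)] at h
    exact ⟨by linarith, hcv⟩
  · rintro ⟨h, hcv⟩
    have hc : 0 < c := by nlinarith
    exact ⟨hc, hcv, (one_lt_div (by positivity)).2 (by linarith)⟩

theorem hasDerivAt_logb_mul_div_add {b a C c : ℝ} (ha : a ≠ 0) (hc : c ≠ 0)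
    (hcC : c + C ≠ 0) :
    HasDerivAt (fun x => logb b (a * x / (x + C))) (C / (c * (c + C) * log b)) c := by
  have hquot : HasDerivAt (fun x => a * x / (x + C)) ((a * (c + C) - a * c * 1) / (c + C) ^ 2) c :=
    (hasDerivAt_const_mul a).fun_div (hasDerivAt_id' c |>.add_const C) hcC
  refine ((hquot.log (by simp [*])).div_const (log b)).congr_deriv ?_
  field_simp
  ring

theorem antitoneOn_div_mul_add {C L : ℝ} (hC : 0 ≤ C) (hL : 0 < L) :
    AntitoneOn (fun c => C / (c * (c + C) * L)) (Ioi 0) := by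
  intro x hx y hy hxy
  rw [mem_Ioi] at hx hy
  dsimp only
  gcongr

section

variable {s : Set ℝ} {v : ℝ} {g g' : ℝ → ℝ}

theorem hasDerivAt_sub_mul {x : ℝ} (hg : HasDerivAt g (g' x) x) :
    HasDerivAt (fun y => (v - y) * g y) (-g x + (v - x) * g' x) x := by
  simpa using ((hasDerivAt_id' x).const_sub v).fun_mul hg

theorem strictAntiOn_deriv_sub_mul (hs : Convex ℝ s) (hsv : ∀ x ∈ s, x < v)
    (hg : ∀ x ∈ s, HasDerivAt g (g' x) x) (hg'_pos : ∀ x ∈ s, 0 < g' x)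
    (hg'_anti : AntitoneOn g' s) : StrictAntiOn (deriv fun x => (v - x) * g x) s := by
  have hg_mono : StrictMonoOn g s := strictMonoOn_of_hasDerivWithinAt_pos hs
    (fun x hx => (hg x hx).continuousAt.continuousWithinAt)
    (fun x hx => (hg x (interior_subset hx)).hasDerivWithinAt)
    (fun x hx => hg'_pos x (interior_subset hx))
  intro x hx y hy hxy
  rw [(hasDerivAt_sub_mul (hg x hx)).deriv, (hasDerivAt_sub_mul (hg y hy)).deriv]
  have hprod := mul_le_mul (sub_le_sub_left hxy.le v) (hg'_anti hx hy hxy.le) (hg'_pos y hy).le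
    (sub_pos.2 (hsv x hx)).le
  linarith [hg_mono hx hy hxy]

theorem strictConcaveOn_sub_mul (hs : Convex ℝ s) (hsv : ∀ x ∈ s, x < v)
    (hg : ∀ x ∈ s, HasDerivAt g (g' x) x) (hg'_pos : ∀ x ∈ s, 0 < g' x)
    (hg'_anti : AntitoneOn g' s) : StrictConcaveOn ℝ s fun x => (v - x) * g x :=
  StrictAntiOn.strictConcaveOn_of_deriv hs
    (fun x hx => (hasDerivAt_sub_mul (hg x hx)).continuousAt.continuousWithinAt)
    ((strictAntiOn_deriv_sub_mul hs hsv hg hg'_pos hg'_anti).mono interior_subset)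

end

theorem utility_strictly_concave_general (v q C K : ℝ) (hC : 0 < C) (hqK : 1 < q * K) :
    StrictConcaveOn ℝ {c : ℝ | 0 < c ∧ c < v ∧ 1 < q * K * c / (c + C)}
      (fun c => (v - c) * Real.logb 2 (q * K * c / (c + C))) ∧
    ∀ c₁ ∈ {c : ℝ | 0 < c ∧ c < v ∧ 1 < q * K * c / (c + C)},
      ∀ c₂ ∈ {c : ℝ | 0 < c ∧ c < v ∧ 1 < q * K * c / (c + C)},
        deriv (fun c => (v - c) * Real.logb 2 (q * K * c / (c + C))) c₁ = 0 →
        deriv (fun c => (v - c) * Real.logb 2 (q * K * c / (c + C))) c₂ = 0 →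
        c₁ = c₂ := by
  rw [setOf_one_lt_mul_div_add_eq_Ioo hC hqK]
  have hpos : ∀ c ∈ Ioo (C / (q * K - 1)) v, 0 < c := fun c hc =>
    (div_pos hC (sub_pos.2 hqK)).trans hc.1
  have hg : ∀ c ∈ Ioo (C / (q * K - 1)) v, HasDerivAt (fun x => logb 2 (q * K * x / (x + C)))
      (C / (c * (c + C) * log 2)) c := fun c hc =>
    hasDerivAt_logb_mul_div_add (by linarith) (hpos c hc).ne' (by linarith [hpos c hc])
  have hg'_pos : ∀ c ∈ Ioo (C / (q * K - 1)) v, 0 < C / (c * (c + C) * log 2) := fun c hc => by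
    have := hpos c hc
    positivity
  have hg'_anti := (antitoneOn_div_mul_add hC.le (log_pos one_lt_two)).mono fun c hc => hpos c hc
  refine ⟨strictConcaveOn_sub_mul (convex_Ioo _ _) (fun c hc => hc.2) hg hg'_pos hg'_anti,
    fun c₁ h₁ c₂ h₂ hU'₁ hU'₂ => ?_⟩
  exact (strictAntiOn_deriv_sub_mul (convex_Ioo _ _) (fun c hc => hc.2) hg hg'_pos hg'_anti).injOn
    h₁ h₂ (hU'₁.trans hU'₂.symm)

/-- With the simple belief, the utility `U(c) = (v - c) * log₂(q*K*c/(c+C))`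
is strictly concave on the interval `I = {c ∈ (0,v) | q*K*c/(c+C) > 1}` (where the believed
throughput is positive and `c < v`); consequently the first-order condition `U'(c) = 0`
has at most one solution in `I`. -/
theorem utility_strictly_concave (v q C K : ℝ) (hv : 0 < v) (hq : 0 < q) (hC : 0 < C)
    (hK : 0 < K) (hqK : 1 < q * K) :
    StrictConcaveOn ℝ {c : ℝ | 0 < c ∧ c < v ∧ 1 < q * K * c / (c + C)}
      (fun c => (v - c) * Real.logb 2 (q * K * c / (c + C))) ∧
    ∀ c₁ ∈ {c : ℝ | 0 < c ∧ c < v ∧ 1 < q * K * c / (c + C)},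
      ∀ c₂ ∈ {c : ℝ | 0 < c ∧ c < v ∧ 1 < q * K * c / (c + C)},
        deriv (fun c => (v - c) * Real.logb 2 (q * K * c / (c + C))) c₁ = 0 →
        deriv (fun c => (v - c) * Real.logb 2 (q * K * c / (c + C))) c₂ = 0 →
        c₁ = c₂ :=
  utility_strictly_concave_general v q C K hC hqK
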